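/- The reduction axiom for negation is valid: for every pointed model M,w and pointed action model A,e and formula φ, M,w ⊨ [A,e]¬φ if and only if M,w ⊨ (pre(e) → ¬[A,e]φ). -/

import Mathlib

/-- Atomic symbols: propositional atoms and observation atoms obs_a p (sign true)
    or obs_a ¬p (sign false). -/
inductive Atm (P A : Type) : Type
  | prop : P → Atm P A
  | obs  : A → P → Bool → Atm P A
deriving DecidableEq

/-- Static formulas of the language OL. -/
inductive Form (P A : Type) : Type
  | atom : Atm P A → Form P A
  | neg  : Form P A → Form P A
  | and  : Form P A → Form P A → Form P A
  | bel  : A → Form P A → Form P A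
deriving DecidableEq

def Form.imp {P A : Type} (φ ψ : Form P A) : Form P A := .neg (.and φ (.neg ψ))

/-- Kripke model with agents A and atoms Atm P A. -/
structure KModel (W P A : Type) where
  R : A → W → W → Prop
  V : Atm P A → W → Prop

/-- Satisfaction relation. -/
def sat {W P A : Type} (M : KModel W P A) : W → Form P A → Prop
  | w, .atom q => M.V q w
  | w, .neg φ => ¬ sat M w φ
  | w, .and φ ψ => sat M w φ ∧ sat M w ψ
  | w, .bel a φ => ∀ v, M.R a w v → sat M v φ

def Euclid {α : Type} (R : α → α → Prop) : Prop := ∀ x y z, R x y → R x z → R y z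
def Trans' {α : Type} (R : α → α → Prop) : Prop := ∀ x y z, R x y → R y z → R x z
def Serial {α : Type} (R : α → α → Prop) : Prop := ∀ x, ∃ y, R x y

/-- Observational epistemic model: each relation is Euclidean, transitive and
    serial, and no world verifies both obs_a p and obs_a ¬p. -/
def ObsModel {W P A : Type} (M : KModel W P A) : Prop :=
  (∀ a, Euclid (M.R a) ∧ Trans' (M.R a) ∧ Serial (M.R a)) ∧
  (∀ a p w, M.V (.obs a p true) w → ¬ M.V (.obs a p false) w)

/-- Action model with preconditions and postconditions. -/
structure ActModel (P A E : Type) where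
  rel : A → E → E → Prop
  pre : E → Form P A
  post : E → Atm P A → Form P A

/-- Product update M ⊗ A: worlds are pairs (w,e) with M,w ⊨ pre(e). -/
def update {W P A E : Type} (M : KModel W P A) (Act : ActModel P A E) :
    KModel {x : W × E // sat M x.1 (Act.pre x.2)} P A where
  R a x y := M.R a x.1.1 y.1.1 ∧ Act.rel a x.1.2 y.1.2
  V q x := sat M x.1.1 (Act.post x.1.2 q)

/-- M,w ⊨ [A,e]φ : if pre(e) holds at w then φ holds at (w,e) in M ⊗ A. -/
def dynBox {W P A E : Type} (M : KModel W P A) (Act : ActModel P A E)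
    (w : W) (e : E) (φ : Form P A) : Prop :=
  ∀ h : sat M w (Act.pre e), sat (update M Act) ⟨(w, e), h⟩ φ

/-- M,w ⊨ ⟨A,e⟩φ : pre(e) holds at w and φ holds at (w,e) in M ⊗ A. -/
def dynDia {W P A E : Type} (M : KModel W P A) (Act : ActModel P A E)
    (w : W) (e : E) (φ : Form P A) : Prop :=
  ∃ h : sat M w (Act.pre e), sat (update M Act) ⟨(w, e), h⟩ φ

/-- reduction axiom for negation:
    M,w ⊨ [A,e]¬φ iff M,w ⊨ pre(e) → ¬[A,e]φ. -/
theorem stmt5 {W P A E : Type} (M : KModel W P A) (Act : ActModel P A E)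
    (w : W) (e : E) (φ : Form P A) :
    dynBox M Act w e (.neg φ) ↔ (sat M w (Act.pre e) → ¬ dynBox M Act w e φ) :=
  ⟨fun hneg hpre hbox => hneg hpre (hbox hpre), fun h hpre hφ => h hpre fun _ => hφ⟩
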